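/- Let D be an abelian monoidal category with right exact tensor product in both variables, A an algebra object, M a right A-module object, and I, J ideals of A. Then (MI)J = M(IJ) as subobjects of M. -/

import Mathlib

/-!
`(MI)J` and `M(IJ)` are the images of `MI ⊗ J ⟶ M` and `M ⊗ IJ ⟶ M`. Precomposed with
`(M ⊗ I ↠ MI) ▷ J` and `M ◁ (I ⊗ J ↠ IJ)`, which are epi by right exactness of the tensor
product, both become `m ⊗ i ⊗ j ↦ m(ij)` up to the associator, by associativity of the action.
In an abelian category precomposing with an epimorphism does not change the image.
-/

open CategoryTheory MonoidalCategory CategoryTheory.Limits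

section

variable {C : Type*} [Category C] [MonoidalCategory C] [Abelian C]

/-- A subobject `X ↪ A` of an algebra object `A` is a (two-sided) ideal if left and
right multiplication by `A` factor through it. -/
def IsIdealSub (A : Mon C) (X : Subobject A.X) : Prop :=
  (∃ l : A.X ⊗ (X : C) ⟶ (X : C), l ≫ X.arrow = (𝟙 A.X ⊗ₘ X.arrow) ≫ A.mon.mul) ∧
  (∃ r : (X : C) ⊗ A.X ⟶ (X : C), r ≫ X.arrow = (X.arrow ⊗ₘ 𝟙 A.X) ≫ A.mon.mul)

end

namespace CategoryTheory.Subobject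

variable {C : Type*} [Category C] [Balanced C] [HasEqualizers C]

theorem mk_image_ι_epi_comp {X' X Y : C} (h : X' ⟶ X) [Epi h] (f : X ⟶ Y) [HasImage f]
    [HasImage (h ≫ f)] : mk (image.ι (h ≫ f)) = mk (image.ι f) :=
  haveI := isIso_of_mono_of_epi (image.preComp h f)
  mk_eq_mk_of_comm _ _ (asIso (image.preComp h f)) (image.preComp_ι h f)

theorem mk_image_ι_eq_of_epi_comp_eq {W X X' Y : C} (e : W ⟶ X) (e' : W ⟶ X') [Epi e] [Epi e']
    (f : X ⟶ Y) (f' : X' ⟶ Y) [HasImage f] [HasImage f'] [HasImage (e ≫ f)] [HasImage (e' ≫ f')]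
    (w : e ≫ f = e' ≫ f') : mk (image.ι f) = mk (image.ι f') := by
  rw [← mk_image_ι_epi_comp e f, ← mk_image_ι_epi_comp e' f']
  congr!

end CategoryTheory.Subobject

theorem tensorHom_act_assoc {C : Type*} [Category C] [MonoidalCategory C] {A : Mon C} {M : C}
    {act : M ⊗ A.X ⟶ M}
    (hassoc : (𝟙 M ⊗ₘ A.mon.mul) ≫ act = (α_ M A.X A.X).inv ≫ (act ⊗ₘ 𝟙 A.X) ≫ act)
    {X Y : C} (a : X ⟶ A.X) (b : Y ⟶ A.X) :
    (((𝟙 M ⊗ₘ a) ≫ act) ⊗ₘ b) ≫ act =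
      (α_ M X Y).hom ≫ (𝟙 M ⊗ₘ ((a ⊗ₘ b) ≫ A.mon.mul)) ≫ act :=
  calc _ = ((𝟙 M ⊗ₘ a) ⊗ₘ b) ≫ (act ⊗ₘ 𝟙 A.X) ≫ act := by
        rw [tensorHom_comp_tensorHom_assoc, Category.comp_id]
    _ = ((𝟙 M ⊗ₘ a) ⊗ₘ b) ≫ (α_ M A.X A.X).hom ≫ (𝟙 M ⊗ₘ A.mon.mul) ≫ act := by
        rw [hassoc, Iso.hom_inv_id_assoc]
    _ = _ := by
        rw [associator_naturality_assoc, tensorHom_comp_tensorHom_assoc, Category.id_comp]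

theorem stmt12_general {D : Type*} [Category D] [MonoidalCategory D] [Abelian D]
    (hre : ∀ Z : D, Nonempty (PreservesFiniteColimits (tensorLeft Z)) ∧
      Nonempty (PreservesFiniteColimits (tensorRight Z)))
    (A : Mon D) (M : D) (act : M ⊗ A.X ⟶ M)
    (hassoc : (𝟙 M ⊗ₘ A.mon.mul) ≫ act = (α_ M A.X A.X).inv ≫ (act ⊗ₘ 𝟙 A.X) ≫ act)
    (I J : Subobject A.X) :
    Subobject.mk (image.ι ((image.ι ((𝟙 M ⊗ₘ I.arrow) ≫ act) ⊗ₘ J.arrow) ≫ act)) =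
      Subobject.mk (image.ι ((𝟙 M ⊗ₘ image.ι ((I.arrow ⊗ₘ J.arrow) ≫ A.mon.mul)) ≫ act)) := by
  have := (hre M).1.some
  have := (hre (J : D)).2.some
  let f := (𝟙 M ⊗ₘ I.arrow) ≫ act
  let g := (I.arrow ⊗ₘ J.arrow) ≫ A.mon.mul
  have : Epi (factorThruImage f ▷ (J : D)) := (tensorRight (J : D)).map_epi _
  have : Epi (M ◁ factorThruImage g) := (tensorLeft M).map_epi _
  refine Subobject.mk_image_ι_eq_of_epi_comp_eq (factorThruImage f ▷ (J : D))
    ((α_ M _ _).hom ≫ M ◁ factorThruImage g) _ _ ?_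
  rw [whiskerRight_comp_tensorHom_assoc, image.fac, Category.assoc,
    whiskerLeft_comp_tensorHom_assoc, image.fac]
  exact tensorHom_act_assoc hassoc I.arrow J.arrow

/-- Let `D` be an abelian monoidal category with right exact
tensor product in both variables, `A` an algebra object, `(M, act)` a right
`A`-module object, and `I, J` ideals of `A`.  Then `(MI)J = M(IJ)` as subobjects
of `M`, where `MI` is the image of `M ⊗ I ⟶ M ⊗ A ⟶ M` and `IJ` is the image of
`I ⊗ J ⟶ A ⊗ A ⟶ A`. -/
theorem stmt12 {D : Type*} [Category D] [MonoidalCategory D] [Abelian D]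
    (hre : ∀ Z : D, Nonempty (PreservesFiniteColimits (tensorLeft Z)) ∧
      Nonempty (PreservesFiniteColimits (tensorRight Z)))
    (A : Mon D) (M : D) (act : M ⊗ A.X ⟶ M)
    (hunit : (𝟙 M ⊗ₘ A.mon.one) ≫ act = (ρ_ M).hom)
    (hassoc : (𝟙 M ⊗ₘ A.mon.mul) ≫ act = (α_ M A.X A.X).inv ≫ (act ⊗ₘ 𝟙 A.X) ≫ act)
    (I J : Subobject A.X) (hI : IsIdealSub A I) (hJ : IsIdealSub A J) :
    Subobject.mk (image.ι ((image.ι ((𝟙 M ⊗ₘ I.arrow) ≫ act) ⊗ₘ J.arrow) ≫ act)) =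
      Subobject.mk (image.ι ((𝟙 M ⊗ₘ image.ι ((I.arrow ⊗ₘ J.arrow) ≫ A.mon.mul)) ≫ act)) :=
  stmt12_general hre A M act hassoc I J
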